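/- arXiv:0712.0108 — 3 statements merged into one kernel-verified Lean document; each statement's English description precedes it below -/
import Mathlib

section
/- Let u : ℝ² → ℝ be smooth and define the sl(2,ℂ)-valued 1-form α_λ = (1/2) [[u_z dz − u_z̄ dz̄, i λ⁻¹ e^u dz + i e^{−u} dz̄], [i e^{−u} dz + i λ e^u dz̄, −u_z dz + u_z̄ dz̄]] for λ ∈ ℂ×. Then the Maurer–Cartan equation 2 dα_λ + [α_λ ∧ α_λ] = 0 holds for all λ ∈ ℂ× if and only if u solves the sinh-Gordon equation ∂∂̄(2u) + sinh(2u) = 0. -/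
/-- Wirtinger derivative ∂f/∂z for a map `f : ℂ → ℂ`. -/
noncomputable def wder (f : ℂ → ℂ) (z : ℂ) : ℂ :=
  (fderiv ℝ f z 1 - Complex.I * fderiv ℝ f z Complex.I) / 2

/-- Wirtinger derivative ∂f/∂z̄ for a map `f : ℂ → ℂ`. -/
noncomputable def wderBar (f : ℂ → ℂ) (z : ℂ) : ℂ :=
  (fderiv ℝ f z 1 + Complex.I * fderiv ℝ f z Complex.I) / 2

lemma wder_const_mul (c : ℂ) (f : ℂ → ℂ) (z : ℂ) (hf : DifferentiableAt ℝ f z) :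
    wder (fun w => c * f w) z = c * wder f z := by
  simp only [wder, fderiv_const_mul hf c, ContinuousLinearMap.smul_apply, smul_eq_mul]
  ring

lemma wderBar_const_mul (c : ℂ) (f : ℂ → ℂ) (z : ℂ) (hf : DifferentiableAt ℝ f z) :
    wderBar (fun w => c * f w) z = c * wderBar f z := by
  simp only [wderBar, fderiv_const_mul hf c, ContinuousLinearMap.smul_apply, smul_eq_mul]
  ring

lemma fderiv_exp_comp (f : ℂ → ℂ) (z : ℂ) (hf : DifferentiableAt ℝ f z) :
    fderiv ℝ (fun w => Complex.exp (f w)) z = Complex.exp (f z) • fderiv ℝ f z := by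
  have h := (((Complex.hasDerivAt_exp (f z)).hasFDerivAt).restrictScalars ℝ).comp z
    hf.hasFDerivAt
  rw [show (fun w => Complex.exp (f w)) = Complex.exp ∘ f from rfl, h.fderiv]
  ext v
  simp [smul_eq_mul]
  ring

lemma wder_exp (f : ℂ → ℂ) (z : ℂ) (hf : DifferentiableAt ℝ f z) :
    wder (fun w => Complex.exp (f w)) z = Complex.exp (f z) * wder f z := by
  simp only [wder, fderiv_exp_comp f z hf, ContinuousLinearMap.smul_apply, smul_eq_mul]
  ring

lemma wderBar_exp (f : ℂ → ℂ) (z : ℂ) (hf : DifferentiableAt ℝ f z) :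
    wderBar (fun w => Complex.exp (f w)) z = Complex.exp (f z) * wderBar f z := by
  simp only [wderBar, fderiv_exp_comp f z hf, ContinuousLinearMap.smul_apply, smul_eq_mul]
  ring

lemma wder_neg (f : ℂ → ℂ) (z : ℂ) : wder (fun w => -f w) z = -wder f z := by
  simp only [wder, fderiv_fun_neg, ContinuousLinearMap.neg_apply]
  ring

lemma wderBar_neg (f : ℂ → ℂ) (z : ℂ) : wderBar (fun w => -f w) z = -wderBar f z := by
  simp only [wderBar, fderiv_fun_neg, ContinuousLinearMap.neg_apply]
  ring

lemma contDiff_wder (f : ℂ → ℂ) (hf : ContDiff ℝ (⊤ : ℕ∞) f) : ContDiff ℝ (⊤ : ℕ∞) (wder f) := by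
  have hD : ContDiff ℝ (⊤ : ℕ∞) (fderiv ℝ f) := hf.fderiv_right (by simp)
  have h1 : ContDiff ℝ (⊤ : ℕ∞) (fun z => fderiv ℝ f z 1) := hD.clm_apply contDiff_const
  have h2 : ContDiff ℝ (⊤ : ℕ∞) (fun z => fderiv ℝ f z Complex.I) := hD.clm_apply contDiff_const
  exact (h1.sub (contDiff_const.mul h2)).div_const 2

lemma contDiff_wderBar (f : ℂ → ℂ) (hf : ContDiff ℝ (⊤ : ℕ∞) f) : ContDiff ℝ (⊤ : ℕ∞) (wderBar f) := by
  have hD : ContDiff ℝ (⊤ : ℕ∞) (fderiv ℝ f) := hf.fderiv_right (by simp)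
  have h1 : ContDiff ℝ (⊤ : ℕ∞) (fun z => fderiv ℝ f z 1) := hD.clm_apply contDiff_const
  have h2 : ContDiff ℝ (⊤ : ℕ∞) (fun z => fderiv ℝ f z Complex.I) := hD.clm_apply contDiff_const
  exact (h1.add (contDiff_const.mul h2)).div_const 2

lemma wder_wderBar_comm (f : ℂ → ℂ) (hf : ContDiff ℝ (⊤ : ℕ∞) f) (z : ℂ) :
    wderBar (wder f) z = wder (wderBar f) z := by
  set D := fderiv ℝ f with hDdef
  have hD : ContDiff ℝ (⊤ : ℕ∞) D := hf.fderiv_right (by simp)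
  have hD' : HasFDerivAt D (fderiv ℝ D z) z := (hD.differentiable (by simp) z).hasFDerivAt
  set f'' := fderiv ℝ D z with hf''
  have hsymm : ∀ v w : ℂ, f'' v w = f'' w v :=
    second_derivative_symmetric (fun y => (hf.differentiable (by simp) y).hasFDerivAt) hD'
  -- evaluation maps
  set e1 : (ℂ →L[ℝ] ℂ) →L[ℝ] ℂ := ContinuousLinearMap.apply ℝ ℂ (1 : ℂ) with he1
  set eI : (ℂ →L[ℝ] ℂ) →L[ℝ] ℂ := ContinuousLinearMap.apply ℝ ℂ (Complex.I) with heI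
  have e1app : ∀ T : ℂ →L[ℝ] ℂ, e1 T = T 1 := fun _ => rfl
  have eIapp : ∀ T : ℂ →L[ℝ] ℂ, eI T = T Complex.I := fun _ => rfl
  have h1 : HasFDerivAt (fun w => D w 1) (e1.comp f'') z := (e1.hasFDerivAt.comp z hD')
  have h2 : HasFDerivAt (fun w => D w Complex.I) (eI.comp f'') z := (eI.hasFDerivAt.comp z hD')
  have hwd : ∀ v : ℂ, fderiv ℝ (wder f) z v = (f'' v 1 - Complex.I * f'' v Complex.I) / 2 := by
    intro v
    have h3 : HasFDerivAt (wder f) ((2:ℂ)⁻¹ • ((e1.comp f'') - (Complex.I • (eI.comp f'')))) z := by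
      have h4 := ((h1.sub (h2.const_mul Complex.I)).const_mul ((2:ℂ)⁻¹))
      have h5 : (fun x => (2:ℂ)⁻¹ * (D x 1 - Complex.I * D x Complex.I)) = wder f := by
        funext w; simp [wder, hDdef]; ring
      rw [← h5]; exact h4
    rw [h3.fderiv]
    simp [smul_eq_mul, e1app, eIapp]
    ring
  have hwb : ∀ v : ℂ, fderiv ℝ (wderBar f) z v = (f'' v 1 + Complex.I * f'' v Complex.I) / 2 := by
    intro v
    have h3 : HasFDerivAt (wderBar f) ((2:ℂ)⁻¹ • ((e1.comp f'') + (Complex.I • (eI.comp f'')))) z := by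
      have h4 := ((h1.add (h2.const_mul Complex.I)).const_mul ((2:ℂ)⁻¹))
      have h5 : (fun x => (2:ℂ)⁻¹ * (D x 1 + Complex.I * D x Complex.I)) = wderBar f := by
        funext w; simp [wderBar, hDdef]; ring
      rw [← h5]; exact h4
    rw [h3.fderiv]
    simp [smul_eq_mul, e1app, eIapp]
    ring
  simp only [wder, wderBar, hwd, hwb, hsymm 1 Complex.I]
  ring


/-- For a smooth `u : ℝ² ≅ ℂ → ℝ`, the sl(2,ℂ)-valued 1-form
`α_λ = α'_λ dz + α''_λ dz̄` from the paper satisfies the Maurer–Cartan equation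
`2 dα_λ + [α_λ ∧ α_λ] = 0` (equivalently `∂̄α'_λ − ∂α''_λ = [α'_λ, α''_λ]`)
for all `λ ∈ ℂ×` if and only if `u` solves the sinh-Gordon equation
`∂∂̄(2u) + sinh(2u) = 0`. -/
theorem maurer_cartan_iff_sinh_gordon (u : ℂ → ℝ) (hu : ContDiff ℝ (⊤ : ℕ∞) u)
    (U : ℂ → ℂ) (hU : U = fun z => (u z : ℂ))
    (αp αpp : ℂ → ℂ → Matrix (Fin 2) (Fin 2) ℂ)
    (hαp : αp = fun lam z => (1 / 2 : ℂ) •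
      !![wder U z, Complex.I * lam⁻¹ * Complex.exp (U z);
         Complex.I * Complex.exp (-U z), -wder U z])
    (hαpp : αpp = fun lam z => (1 / 2 : ℂ) •
      !![-wderBar U z, Complex.I * Complex.exp (-U z);
         Complex.I * lam * Complex.exp (U z), wderBar U z]) :
    (∀ lam : ℂ, lam ≠ 0 → ∀ z : ℂ,
        (Matrix.of fun i j => wderBar (fun w => αp lam w i j) z
            - wder (fun w => αpp lam w i j) z)
          = αp lam z * αpp lam z - αpp lam z * αp lam z)
      ↔ (∀ z : ℂ, 2 * wder (fun w => wderBar U w) z + Complex.sinh (2 * U z) = 0) := by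
  have hUc : ContDiff ℝ (⊤ : ℕ∞) U := by
    rw [hU]
    exact Complex.ofRealCLM.contDiff.comp hu
  have hUd : ∀ z, DifferentiableAt ℝ U z := fun z => hUc.differentiable (by simp) z
  have hEd : ∀ z, DifferentiableAt ℝ (fun w => Complex.exp (U w)) z := fun z =>
    (Complex.differentiable_exp (𝕜 := ℝ) (U z)).comp z (hUd z)
  have hFd : ∀ z, DifferentiableAt ℝ (fun w => Complex.exp (-U w)) z := fun z =>
    (Complex.differentiable_exp (𝕜 := ℝ) (-U z)).comp z (hUd z).neg
  have hwdd : ∀ z, DifferentiableAt ℝ (wder U) z := fun z =>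
    (contDiff_wder U hUc).differentiable (by simp) z
  have hwbd : ∀ z, DifferentiableAt ℝ (wderBar U) z := fun z =>
    (contDiff_wderBar U hUc).differentiable (by simp) z
  -- derivative formulas
  have hwbE : ∀ z, wderBar (fun w => Complex.exp (U w)) z
      = Complex.exp (U z) * wderBar U z := fun z => wderBar_exp U z (hUd z)
  have hwdE : ∀ z, wder (fun w => Complex.exp (U w)) z
      = Complex.exp (U z) * wder U z := fun z => wder_exp U z (hUd z)
  have hwbF : ∀ z, wderBar (fun w => Complex.exp (-U w)) z
      = -(Complex.exp (-U z) * wderBar U z) := by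
    intro z
    have h1 := wderBar_exp (fun w => -U w) z (hUd z).neg
    have h2 := wderBar_neg U z
    rw [h1, h2]; ring
  have hwdF : ∀ z, wder (fun w => Complex.exp (-U w)) z
      = -(Complex.exp (-U z) * wder U z) := by
    intro z
    have h1 := wder_exp (fun w => -U w) z (hUd z).neg
    have h2 := wder_neg U z
    rw [h1, h2]; ring
  have hsym : ∀ z, wderBar (wder U) z = wder (wderBar U) z := wder_wderBar_comm U hUc
  -- entry functions
  have f00 : ∀ lam : ℂ, (fun w => αp lam w 0 0) = (fun w => (1/2 : ℂ) * wder U w) := by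
    intro lam; funext w; simp [hαp]
  have f01 : ∀ lam : ℂ, (fun w => αp lam w 0 1)
      = (fun w => (Complex.I * lam⁻¹ / 2) * Complex.exp (U w)) := by
    intro lam; funext w; simp [hαp]; try ring
  have f10 : ∀ lam : ℂ, (fun w => αp lam w 1 0)
      = (fun w => (Complex.I / 2) * Complex.exp (-U w)) := by
    intro lam; funext w; simp [hαp]; try ring
  have f11 : ∀ lam : ℂ, (fun w => αp lam w 1 1) = (fun w => (-(1/2) : ℂ) * wder U w) := by
    intro lam; funext w; simp [hαp]; try ring
  have g00 : ∀ lam : ℂ, (fun w => αpp lam w 0 0) = (fun w => (-(1/2) : ℂ) * wderBar U w) := by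
    intro lam; funext w; simp [hαpp]; try ring
  have g01 : ∀ lam : ℂ, (fun w => αpp lam w 0 1)
      = (fun w => (Complex.I / 2) * Complex.exp (-U w)) := by
    intro lam; funext w; simp [hαpp]; try ring
  have g10 : ∀ lam : ℂ, (fun w => αpp lam w 1 0)
      = (fun w => (Complex.I * lam / 2) * Complex.exp (U w)) := by
    intro lam; funext w; simp [hαpp]; try ring
  have g11 : ∀ lam : ℂ, (fun w => αpp lam w 1 1) = (fun w => (1/2 : ℂ) * wderBar U w) := by
    intro lam; funext w; simp [hαpp]
  -- derivative of entries
  have P00 : ∀ (lam : ℂ) z, wderBar (fun w => αp lam w 0 0) z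
      = (1/2 : ℂ) * wderBar (wder U) z := by
    intro lam z; rw [f00]; exact wderBar_const_mul _ _ _ (hwdd z)
  have P01 : ∀ (lam : ℂ) z, wderBar (fun w => αp lam w 0 1) z
      = (Complex.I * lam⁻¹ / 2) * (Complex.exp (U z) * wderBar U z) := by
    intro lam z; rw [f01, wderBar_const_mul _ _ _ (hEd z), hwbE]
  have P10 : ∀ (lam : ℂ) z, wderBar (fun w => αp lam w 1 0) z
      = (Complex.I / 2) * (-(Complex.exp (-U z) * wderBar U z)) := by
    intro lam z; rw [f10, wderBar_const_mul _ _ _ (hFd z), hwbF]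
  have P11 : ∀ (lam : ℂ) z, wderBar (fun w => αp lam w 1 1) z
      = (-(1/2) : ℂ) * wderBar (wder U) z := by
    intro lam z; rw [f11]; exact wderBar_const_mul _ _ _ (hwdd z)
  have Q00 : ∀ (lam : ℂ) z, wder (fun w => αpp lam w 0 0) z
      = (-(1/2) : ℂ) * wder (wderBar U) z := by
    intro lam z; rw [g00]; exact wder_const_mul _ _ _ (hwbd z)
  have Q01 : ∀ (lam : ℂ) z, wder (fun w => αpp lam w 0 1) z
      = (Complex.I / 2) * (-(Complex.exp (-U z) * wder U z)) := by
    intro lam z; rw [g01, wder_const_mul _ _ _ (hFd z), hwdF]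
  have Q10 : ∀ (lam : ℂ) z, wder (fun w => αpp lam w 1 0) z
      = (Complex.I * lam / 2) * (Complex.exp (U z) * wder U z) := by
    intro lam z; rw [g10, wder_const_mul _ _ _ (hEd z), hwdE]
  have Q11 : ∀ (lam : ℂ) z, wder (fun w => αpp lam w 1 1) z
      = (1/2 : ℂ) * wder (wderBar U) z := by
    intro lam z; rw [g11]; exact wder_const_mul _ _ _ (hwbd z)
  have hsinh : ∀ z : ℂ, Complex.sinh (2 * U z)
      = (Complex.exp (U z) * Complex.exp (U z)
        - Complex.exp (-U z) * Complex.exp (-U z)) / 2 := by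
    intro z
    rw [Complex.sinh, two_mul, Complex.exp_add, neg_add, Complex.exp_add]
  constructor
  · intro h z
    have h1 := h 1 one_ne_zero z
    have h00 : wderBar (fun w => αp 1 w 0 0) z - wder (fun w => αpp 1 w 0 0) z
        = (αp 1 z * αpp 1 z - αpp 1 z * αp 1 z) 0 0 := by
      have := congrFun (congrFun h1 0) 0
      simpa using this
    rw [P00, Q00, hsym] at h00
    rw [hsinh]
    simp only [hαp, hαpp, Matrix.sub_apply, Matrix.mul_apply, Fin.sum_univ_two,
      Matrix.smul_apply, smul_eq_mul, Matrix.of_apply, Matrix.cons_val', Matrix.cons_val_zero,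
      Matrix.cons_val_one, Matrix.head_cons, Matrix.head_fin_const, Matrix.empty_val',
      Matrix.cons_val_fin_one, inv_one, one_mul, mul_one] at h00
    linear_combination (2 : ℂ) * h00
      + ((Complex.exp (U z)^2 - Complex.exp (-U z)^2)/2) * Complex.I_sq
  · intro h lam hlam z
    have hl : lam * lam⁻¹ = 1 := mul_inv_cancel₀ hlam
    have hz := h z
    rw [hsinh] at hz
    funext i j
    fin_cases i <;> fin_cases j
    · show wderBar (fun w => αp lam w 0 0) z - wder (fun w => αpp lam w 0 0) z
        = (αp lam z * αpp lam z - αpp lam z * αp lam z) 0 0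
      rw [P00, Q00, hsym]
      simp only [hαp, hαpp, Matrix.sub_apply, Matrix.mul_apply, Fin.sum_univ_two,
        Matrix.smul_apply, smul_eq_mul, Matrix.of_apply, Matrix.cons_val', Matrix.cons_val_zero,
        Matrix.cons_val_one, Matrix.head_cons, Matrix.head_fin_const, Matrix.empty_val',
        Matrix.cons_val_fin_one]
      linear_combination (1/2 : ℂ) * hz
        + ((Complex.exp (-U z)^2 - Complex.exp (U z)^2)/4) * Complex.I_sq
        + (-(Complex.exp (U z)^2 * Complex.I^2)/4) * hl
    · show wderBar (fun w => αp lam w 0 1) z - wder (fun w => αpp lam w 0 1) z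
        = (αp lam z * αpp lam z - αpp lam z * αp lam z) 0 1
      rw [P01, Q01]
      simp only [hαp, hαpp, Matrix.sub_apply, Matrix.mul_apply, Fin.sum_univ_two,
        Matrix.smul_apply, smul_eq_mul, Matrix.of_apply, Matrix.cons_val', Matrix.cons_val_zero,
        Matrix.cons_val_one, Matrix.head_cons, Matrix.head_fin_const, Matrix.empty_val',
        Matrix.cons_val_fin_one]
      ring
    · show wderBar (fun w => αp lam w 1 0) z - wder (fun w => αpp lam w 1 0) z
        = (αp lam z * αpp lam z - αpp lam z * αp lam z) 1 0
      rw [P10, Q10]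
      simp only [hαp, hαpp, Matrix.sub_apply, Matrix.mul_apply, Fin.sum_univ_two,
        Matrix.smul_apply, smul_eq_mul, Matrix.of_apply, Matrix.cons_val', Matrix.cons_val_zero,
        Matrix.cons_val_one, Matrix.head_cons, Matrix.head_fin_const, Matrix.empty_val',
        Matrix.cons_val_fin_one]
      ring
    · show wderBar (fun w => αp lam w 1 1) z - wder (fun w => αpp lam w 1 1) z
        = (αp lam z * αpp lam z - αpp lam z * αp lam z) 1 1
      rw [P11, Q11, hsym]
      simp only [hαp, hαpp, Matrix.sub_apply, Matrix.mul_apply, Fin.sum_univ_two,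
        Matrix.smul_apply, smul_eq_mul, Matrix.of_apply, Matrix.cons_val', Matrix.cons_val_zero,
        Matrix.cons_val_one, Matrix.head_cons, Matrix.head_fin_const, Matrix.empty_val',
        Matrix.cons_val_fin_one]
      linear_combination (-(1/2) : ℂ) * hz
        + ((Complex.exp (U z)^2 - Complex.exp (-U z)^2)/4) * Complex.I_sq
        + ((Complex.exp (U z)^2 * Complex.I^2)/4) * hl
end

section
/- Fix g ∈ ℕ₀ and a polynomial a of degree 2g satisfying the reality condition λ^{2g} conj(a(λ̄⁻¹)) = −a(λ). The isospectral set K_a = {ξ ∈ Λ^g_{−1} sl(2,ℂ) : det ξ(λ) = −λ⁻¹ a(λ) for all λ ∈ ℂ×} is a compact subset of the finite-dimensional real vector space Λ^g_{−1} sl(2,ℂ). -/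
open Matrix

/-- The elementary matrix ε₊. -/
def epsPlus : Matrix (Fin 2) (Fin 2) ℂ := !![0, 1; 0, 0]

/-- The real vector space `Λ^g_{−1} sl(2,ℂ)` of Laurent polynomials
`ξ = Σ_{d=−1}^{g} ξ_d λ^d` (here `ξ k` encodes the coefficient `ξ_{k−1}`)
with `ξ_{−1} ∈ ℂ·ε₊`, each `ξ_d ∈ sl(2,ℂ)`, and the reality condition
`ξ_d = −(ξ_{g−1−d})ᴴ`. -/
def LambdaSet (g : ℕ) : Set (Fin (g + 2) → Matrix (Fin 2) (Fin 2) ℂ) :=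
  {ξ | (∀ k, (ξ k).trace = 0) ∧ (∃ c : ℂ, ξ 0 = c • epsPlus) ∧
       (∀ k, ξ k = -((ξ (Fin.rev k)).conjTranspose))}

/-- Evaluation of the Laurent polynomial `ξ` at `λ`:
`ξ(λ) = Σ_{d=−1}^{g} ξ_d λ^d`. -/
noncomputable def evalXi (g : ℕ) (ξ : Fin (g + 2) → Matrix (Fin 2) (Fin 2) ℂ)
    (lam : ℂ) : Matrix (Fin 2) (Fin 2) ℂ :=
  ∑ k : Fin (g + 2), (lam ^ (k : ℕ) * lam⁻¹) • ξ k

/-- Discrete orthogonality of the powers of a primitive `n`-th root of unity. -/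
lemma orth_aux (n : ℕ) (hn : n ≠ 0) (ζ : ℂ) (hζ : IsPrimitiveRoot ζ n) (j k : Fin n) :
    ∑ m : Fin n, ζ ^ ((k : ℕ) * (m : ℕ)) * ζ⁻¹ ^ ((j : ℕ) * (m : ℕ))
      = if j = k then (n : ℂ) else 0 := by
  have hz : ζ ≠ 0 := hζ.ne_zero hn
  have hterm : ∀ m : Fin n, ζ ^ ((k : ℕ) * (m : ℕ)) * ζ⁻¹ ^ ((j : ℕ) * (m : ℕ))
      = (ζ ^ (k : ℕ) * ζ⁻¹ ^ (j : ℕ)) ^ (m : ℕ) := by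
    intro m; rw [pow_mul, pow_mul, mul_pow]
  rw [Finset.sum_congr rfl fun m _ => hterm m]
  by_cases h : j = k
  · subst h
    simp [← mul_pow, inv_pow, mul_inv_cancel₀ (pow_ne_zero (j : ℕ) hz)]
  · have hw : ζ ^ (k : ℕ) * ζ⁻¹ ^ (j : ℕ) ≠ 1 := by
      intro hc
      apply h
      have hkj : ζ ^ (k : ℕ) = ζ ^ (j : ℕ) := by
        have := congrArg (· * ζ ^ (j : ℕ)) hc
        simpa [mul_assoc, inv_pow, inv_mul_cancel₀ (pow_ne_zero (j : ℕ) hz)] using this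
      exact (Fin.ext (hζ.pow_inj j.isLt k.isLt hkj.symm)).symm ▸ rfl
    rw [Fin.sum_univ_eq_sum_range (fun m => (ζ ^ (k : ℕ) * ζ⁻¹ ^ (j : ℕ)) ^ m) n,
      geom_sum_eq hw]
    have h1 : ζ ^ n = 1 := hζ.pow_eq_one
    have hwn : (ζ ^ (k : ℕ) * ζ⁻¹ ^ (j : ℕ)) ^ n = 1 := by
      rw [mul_pow, ← pow_mul, ← pow_mul, mul_comm (k : ℕ) n, mul_comm (j : ℕ) n,
        pow_mul, pow_mul, h1, inv_pow, h1, one_pow, inv_one, one_pow, mul_one]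
    rw [hwn]
    simp [h]

lemma entry_bound_aux (g : ℕ) (a : Polynomial ℂ)
    (ξ : Fin (g + 2) → Matrix (Fin 2) (Fin 2) ℂ)
    (h1 : ∀ k, (ξ k).trace = 0)
    (h3 : ∀ k, ξ k = -((ξ (Fin.rev k)).conjTranspose))
    (lam : ℂ) (hlam : lam ≠ 0) (habs : ‖lam‖ = 1)
    (hdet : (evalXi g ξ lam).det = -(lam⁻¹ * a.eval lam))
    (i j : Fin 2) :
    ‖(evalXi g ξ lam) i j‖ ^ 2 ≤ ‖a.eval lam‖ := by
  set μ := lam * lam⁻¹ ^ g with hμ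
  set M := evalXi g ξ lam with hM
  have hconj : (starRingEnd ℂ) lam = lam⁻¹ := by
    refine eq_inv_of_mul_eq_one_left ?_
    rw [mul_comm, Complex.mul_conj, Complex.normSq_eq_norm_sq, habs]
    norm_num
  -- trace
  have htr : M.trace = 0 := by
    simp [hM, evalXi, Matrix.trace_sum, Matrix.trace_smul, h1]
  have htrM : M 1 1 = -(M 0 0) := by
    have h := htr
    rw [Matrix.trace_fin_two] at h
    linear_combination h
  -- conjTranspose relation
  have hxc : ∀ k, (ξ k)ᴴ = -(ξ (Fin.rev k)) := by
    intro k; rw [h3 k]; simp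
  have hsc : ∀ k : Fin (g + 2), star (lam ^ (k : ℕ) * lam⁻¹) = (lam⁻¹) ^ (k : ℕ) * lam := by
    intro k
    rw [Complex.star_def, _root_.map_mul, map_pow, hconj, map_inv₀, hconj, inv_inv]
  have step1 : Mᴴ = ∑ k : Fin (g + 2), (((lam⁻¹) ^ (k : ℕ) * lam) • (-(ξ (Fin.rev k)))) := by
    show (∑ k : Fin (g + 2), (lam ^ (k : ℕ) * lam⁻¹) • ξ k)ᴴ = _
    rw [Matrix.conjTranspose_sum]
    exact Finset.sum_congr rfl fun k _ => by rw [Matrix.conjTranspose_smul, hxc k, hsc k]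
  have step2 : ∑ k : Fin (g + 2), (((lam⁻¹) ^ (k : ℕ) * lam) • (-(ξ (Fin.rev k))))
      = ∑ k : Fin (g + 2), (((lam⁻¹) ^ ((Fin.rev k : Fin (g+2)) : ℕ) * lam) • (-(ξ k))) := by
    exact Fintype.sum_equiv Fin.revPerm _ _ (fun k => by simp [Fin.rev_rev])
  have hherm : Mᴴ = (-μ) • M := by
    rw [step1, step2]
    rw [show (-μ) • M = ∑ k : Fin (g + 2), ((-μ) * (lam ^ (k : ℕ) * lam⁻¹)) • ξ k by
      simp [hM, evalXi, Finset.smul_sum, smul_smul]]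
    refine Finset.sum_congr rfl fun k _ => ?_
    rw [smul_neg, ← neg_smul]
    congr 1
    have hle : (k : ℕ) < g + 2 := k.isLt
    have hrev : ((Fin.rev k : Fin (g+2)) : ℕ) = g + 1 - (k : ℕ) := by
      rw [Fin.val_rev]; omega
    rw [hrev]
    have h2 : (lam⁻¹) ^ (g + 1 - (k : ℕ)) = (lam⁻¹) ^ (g + 1) * lam ^ (k : ℕ) := by
      have hadd : (g + 1 - (k : ℕ)) + (k : ℕ) = g + 1 := by omega
      calc (lam⁻¹) ^ (g + 1 - (k : ℕ))
          = (lam⁻¹) ^ (g + 1 - (k : ℕ)) * ((lam⁻¹) ^ (k : ℕ) * lam ^ (k : ℕ)) := by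
            rw [← mul_pow, inv_mul_cancel₀ hlam, one_pow, mul_one]
        _ = (lam⁻¹) ^ (g + 1) * lam ^ (k : ℕ) := by rw [← mul_assoc, ← pow_add, hadd]
    rw [h2, pow_succ, hμ]
    ring
  -- entry relations
  have e00 : (starRingEnd ℂ) (M 0 0) = -μ * M 0 0 := by
    have h := congrFun (congrFun hherm 0) 0
    simpa [Matrix.conjTranspose_apply, Matrix.smul_apply, Complex.star_def, smul_eq_mul] using h
  have e01 : (starRingEnd ℂ) (M 1 0) = -μ * M 0 1 := by
    have h := congrFun (congrFun hherm 0) 1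
    simpa [Matrix.conjTranspose_apply, Matrix.smul_apply, Complex.star_def, smul_eq_mul] using h
  have e10 : (starRingEnd ℂ) (M 0 1) = -μ * M 1 0 := by
    have h := congrFun (congrFun hherm 1) 0
    simpa [Matrix.conjTranspose_apply, Matrix.smul_apply, Complex.star_def, smul_eq_mul] using h
  have hs : M 0 0 ^ 2 + M 0 1 * M 1 0 = lam⁻¹ * a.eval lam := by
    have hd := hdet
    rw [Matrix.det_fin_two, htrM] at hd
    linear_combination -hd
  have key : ((Complex.normSq (M 0 0) + Complex.normSq (M 0 1) : ℝ) : ℂ)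
      = -μ * (lam⁻¹ * a.eval lam) := by
    calc ((Complex.normSq (M 0 0) + Complex.normSq (M 0 1) : ℝ) : ℂ)
        = ((Complex.normSq (M 0 0) : ℝ) : ℂ) + ((Complex.normSq (M 0 1) : ℝ) : ℂ) := by
          push_cast; ring
      _ = M 0 0 * (starRingEnd ℂ) (M 0 0) + M 0 1 * (starRingEnd ℂ) (M 0 1) := by
          rw [Complex.mul_conj, Complex.mul_conj]
      _ = M 0 0 * (-μ * M 0 0) + M 0 1 * (-μ * M 1 0) := by rw [e00, e10]
      _ = -μ * (M 0 0 ^ 2 + M 0 1 * M 1 0) := by ring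
      _ = -μ * (lam⁻¹ * a.eval lam) := by rw [hs]
  have hμabs : ‖μ‖ = 1 := by
    rw [hμ, norm_mul, norm_pow, norm_inv, habs]
    norm_num
  have habs2 : Complex.normSq (M 0 0) + Complex.normSq (M 0 1) = ‖a.eval lam‖ := by
    have h := congrArg (‖·‖) key
    rw [Complex.norm_real,
      Real.norm_of_nonneg (add_nonneg (Complex.normSq_nonneg _) (Complex.normSq_nonneg _)),
      norm_mul, norm_mul, norm_neg, hμabs, norm_inv, habs] at h
    simpa using h
  -- conclude
  have hn0 : 0 ≤ Complex.normSq (M 0 0) := Complex.normSq_nonneg _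
  have hn1 : 0 ≤ Complex.normSq (M 0 1) := Complex.normSq_nonneg _
  have h10abs : ‖M 1 0‖ = ‖M 0 1‖ := by
    have h := congrArg (‖·‖) e01
    rwa [Complex.norm_conj, norm_mul, norm_neg, hμabs, one_mul] at h
  have hgoal : ∀ i j : Fin 2, ‖M i j‖ ^ 2 ≤ ‖a.eval lam‖ := by
    intro i j
    fin_cases i <;> fin_cases j
    · show ‖M 0 0‖ ^ 2 ≤ _
      rw [Complex.sq_norm, ← habs2]; linarith
    · show ‖M 0 1‖ ^ 2 ≤ _
      rw [Complex.sq_norm, ← habs2]; linarith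
    · show ‖M 1 0‖ ^ 2 ≤ _
      rw [h10abs, Complex.sq_norm, ← habs2]; linarith
    · show ‖M 1 1‖ ^ 2 ≤ _
      rw [htrM, norm_neg, Complex.sq_norm, ← habs2]; linarith
  exact hgoal i j

/-- For a polynomial `a` of degree `2g` satisfying the reality
condition `λ^{2g} conj(a(λ̄⁻¹)) = −a(λ)`, the isospectral set
`K_a = {ξ ∈ Λ^g_{−1} sl(2,ℂ) : det ξ(λ) = −λ⁻¹ a(λ)}` is compact. -/
theorem isospectral_set_compact (g : ℕ) (a : Polynomial ℂ)
    (hdeg : a.natDegree = 2 * g)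
    (hre : ∀ lam : ℂ, lam ≠ 0 →
      lam ^ (2 * g) * (starRingEnd ℂ) (a.eval ((starRingEnd ℂ lam)⁻¹)) = -a.eval lam) :
    IsCompact {ξ : Fin (g + 2) → Matrix (Fin 2) (Fin 2) ℂ |
      ξ ∈ LambdaSet g ∧
        ∀ lam : ℂ, lam ≠ 0 → (evalXi g ξ lam).det = -(lam⁻¹ * a.eval lam)} := by
  have hn0 : (g + 2) ≠ 0 := by omega
  set ζ := Complex.exp (2 * (Real.pi : ℂ) * Complex.I / ((g + 2 : ℕ) : ℂ)) with hζdef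
  have hζ : IsPrimitiveRoot ζ (g + 2) := Complex.isPrimitiveRoot_exp _ hn0
  have hζ0 : ζ ≠ 0 := hζ.ne_zero hn0
  have hζabs : ‖ζ‖ = 1 := by
    have he : (2 * (Real.pi : ℂ) * Complex.I / ((g + 2 : ℕ) : ℂ))
        = ((2 * Real.pi / (g + 2 : ℕ) : ℝ) : ℂ) * Complex.I := by
      push_cast; ring
    rw [hζdef, he, Complex.norm_exp_ofReal_mul_I]
  set B0 : ℝ := ∑ i ∈ Finset.range (a.natDegree + 1), ‖a.coeff i‖ with hB0
  have hpoly : ∀ lam : ℂ, ‖lam‖ = 1 → ‖a.eval lam‖ ≤ B0 := by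
    intro lam habs
    rw [Polynomial.eval_eq_sum_range, hB0]
    refine le_trans (norm_sum_le _ _) (le_of_eq (Finset.sum_congr rfl fun i _ => ?_))
    rw [norm_mul, norm_pow, habs, one_pow, mul_one]
  set B : ℝ := Real.sqrt B0 with hB
  -- the reconstruction map
  set Ψ : (Fin (g + 2) → Matrix (Fin 2) (Fin 2) ℂ) → (Fin (g + 2) → Matrix (Fin 2) (Fin 2) ℂ) :=
    fun v j => (((g + 2 : ℕ) : ℂ))⁻¹ •
      ∑ m : Fin (g + 2), (ζ ^ (m : ℕ) * ζ⁻¹ ^ ((j : ℕ) * (m : ℕ))) • v m with hΨdef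
  have hΨcont : Continuous Ψ := by
    apply continuous_pi
    intro j
    fun_prop
  set K : Set (Fin (g + 2) → Matrix (Fin 2) (Fin 2) ℂ) :=
    Set.univ.pi fun _ : Fin (g + 2) =>
      (Set.univ.pi fun _ : Fin 2 => Set.univ.pi fun _ : Fin 2 => Metric.closedBall (0 : ℂ) B :
        Set (Matrix (Fin 2) (Fin 2) ℂ)) with hK
  have hKcomp : IsCompact K :=
    isCompact_univ_pi fun _ => isCompact_univ_pi fun _ => isCompact_univ_pi fun _ =>
      isCompact_closedBall _ _
  -- closedness
  have hclosed : IsClosed {ξ : Fin (g + 2) → Matrix (Fin 2) (Fin 2) ℂ |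
      ξ ∈ LambdaSet g ∧
        ∀ lam : ℂ, lam ≠ 0 → (evalXi g ξ lam).det = -(lam⁻¹ * a.eval lam)} := by
    have hLam : IsClosed (LambdaSet g) := by
      rw [show LambdaSet g = {ξ : Fin (g + 2) → Matrix (Fin 2) (Fin 2) ℂ | ∀ k, (ξ k).trace = 0}
          ∩ ({ξ | ∃ c : ℂ, ξ 0 = c • epsPlus}
          ∩ {ξ | ∀ k, ξ k = -((ξ (Fin.rev k)).conjTranspose)}) from rfl]
      refine IsClosed.inter ?_ (IsClosed.inter ?_ ?_)
      · rw [Set.setOf_forall]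
        exact isClosed_iInter fun k =>
          isClosed_eq ((continuous_apply k).matrix_trace) continuous_const
      · have hset : {ξ : Fin (g + 2) → Matrix (Fin 2) (Fin 2) ℂ | ∃ c : ℂ, ξ 0 = c • epsPlus}
            = {ξ | ξ 0 0 0 = 0} ∩ ({ξ | ξ 0 1 0 = 0} ∩ {ξ | ξ 0 1 1 = 0}) := by
          ext ξ
          constructor
          · rintro ⟨c, hc⟩
            refine ⟨by simp [hc, epsPlus], by simp [hc, epsPlus], by simp [hc, epsPlus]⟩
          · rintro ⟨h00, h10, h11⟩
            refine ⟨ξ 0 0 1, ?_⟩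
            ext i j
            fin_cases i <;> fin_cases j <;>
              simp_all [epsPlus]
        rw [hset]
        have hent : ∀ (i j : Fin 2), Continuous
            (fun ξ : Fin (g + 2) → Matrix (Fin 2) (Fin 2) ℂ => ξ 0 i j) := by
          intro i j
          exact (continuous_apply j).comp ((continuous_apply i).comp (continuous_apply 0))
        exact ((isClosed_eq (hent 0 0) continuous_const).inter
          ((isClosed_eq (hent 1 0) continuous_const).inter
            (isClosed_eq (hent 1 1) continuous_const)))
      · rw [Set.setOf_forall]
        refine isClosed_iInter fun k => isClosed_eq (continuous_apply k) ?_
        exact ((continuous_apply (Fin.rev k)).matrix_conjTranspose).neg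
    refine IsClosed.inter hLam ?_
    show IsClosed {ξ : Fin (g + 2) → Matrix (Fin 2) (Fin 2) ℂ |
      ∀ lam : ℂ, lam ≠ 0 → (evalXi g ξ lam).det = -(lam⁻¹ * a.eval lam)}
    rw [Set.setOf_forall]
    refine isClosed_iInter fun lam => ?_
    rcases eq_or_ne lam 0 with h | h
    · simp [h]
    · have : {ξ : Fin (g + 2) → Matrix (Fin 2) (Fin 2) ℂ |
          lam ≠ 0 → (evalXi g ξ lam).det = -(lam⁻¹ * a.eval lam)}
          = {ξ | (evalXi g ξ lam).det = -(lam⁻¹ * a.eval lam)} := by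
        ext ξ; simp [h]
      rw [this]
      refine isClosed_eq ?_ continuous_const
      exact Continuous.matrix_det
        (continuous_finset_sum _ fun k _ => by fun_prop)
    -- note: evalXi unfolds to the sum definitionally
  -- main inclusion
  refine IsCompact.of_isClosed_subset (hKcomp.image hΨcont) hclosed ?_
  rintro ξ ⟨⟨h1, _h2, h3⟩, hdet⟩
  refine ⟨fun m => evalXi g ξ (ζ ^ (m : ℕ)), ?_, ?_⟩
  · -- membership in the box
    intro m _
    intro i _
    intro j _
    rw [Metric.mem_closedBall, dist_zero_right]
    have hzm : (ζ : ℂ) ^ (m : ℕ) ≠ 0 := pow_ne_zero _ hζ0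
    have hzmabs : ‖ζ ^ (m : ℕ)‖ = 1 := by rw [norm_pow, hζabs, one_pow]
    have hb := entry_bound_aux g a ξ h1 h3 (ζ ^ (m : ℕ)) hzm hzmabs (hdet _ hzm) i j
    have hb2 : ‖(evalXi g ξ (ζ ^ (m : ℕ))) i j‖ ^ 2 ≤ B0 :=
      le_trans hb (hpoly _ hzmabs)
    rw [hB]
    rw [show (Real.sqrt B0) = Real.sqrt B0 from rfl]
    exact (Real.le_sqrt (norm_nonneg _) (le_trans (sq_nonneg _) hb2)).mpr hb2
  · -- Ψ of the values recovers ξ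
    funext j
    show (((g + 2 : ℕ) : ℂ))⁻¹ •
        ∑ m : Fin (g + 2), (ζ ^ (m : ℕ) * ζ⁻¹ ^ ((j : ℕ) * (m : ℕ))) •
          (∑ k : Fin (g + 2), ((ζ ^ (m : ℕ)) ^ (k : ℕ) * (ζ ^ (m : ℕ))⁻¹) • ξ k) = ξ j
    have hone : ∀ m : Fin (g + 2), ζ ^ (m : ℕ) * ζ⁻¹ ^ (m : ℕ) = 1 := by
      intro m; rw [← mul_pow, mul_inv_cancel₀ hζ0, one_pow]
    have hterm : ∀ m k : Fin (g + 2),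
        (ζ ^ (m : ℕ) * ζ⁻¹ ^ ((j : ℕ) * (m : ℕ))) * ((ζ ^ (m : ℕ)) ^ (k : ℕ) * (ζ ^ (m : ℕ))⁻¹)
          = ζ ^ ((k : ℕ) * (m : ℕ)) * ζ⁻¹ ^ ((j : ℕ) * (m : ℕ)) := by
      intro m k
      rw [← pow_mul, ← inv_pow, mul_comm (m : ℕ) (k : ℕ)]
      linear_combination (ζ ^ ((k : ℕ) * (m : ℕ)) * ζ⁻¹ ^ ((j : ℕ) * (m : ℕ))) * hone m
    have hcast : ((g + 2 : ℕ) : ℂ) ≠ 0 := Nat.cast_ne_zero.mpr hn0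
    have hinner : ∀ k : Fin (g + 2),
        ∑ m : Fin (g + 2),
          ((ζ ^ (m : ℕ) * ζ⁻¹ ^ ((j : ℕ) * (m : ℕ))) *
            ((ζ ^ (m : ℕ)) ^ (k : ℕ) * (ζ ^ (m : ℕ))⁻¹)) • ξ k
          = (if j = k then ((g + 2 : ℕ) : ℂ) else 0) • ξ k := by
      intro k
      rw [← Finset.sum_smul]
      congr 1
      rw [Finset.sum_congr rfl fun m _ => hterm m k]
      exact orth_aux (g + 2) hn0 ζ hζ j k
    have hmain : ∑ m : Fin (g + 2), (ζ ^ (m : ℕ) * ζ⁻¹ ^ ((j : ℕ) * (m : ℕ))) •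
        (∑ k : Fin (g + 2), ((ζ ^ (m : ℕ)) ^ (k : ℕ) * (ζ ^ (m : ℕ))⁻¹) • ξ k)
        = ((g + 2 : ℕ) : ℂ) • ξ j := by
      simp only [Finset.smul_sum, smul_smul]
      rw [Finset.sum_comm]
      rw [Finset.sum_congr rfl fun k _ => hinner k]
      simp only [ite_smul, zero_smul]
      rw [Finset.sum_ite_eq]
      simp
    rw [hmain, smul_smul, inv_mul_cancel₀ hcast, one_smul]
end

section
/- Suppose a is a polynomial of degree 2g satisfying the reality condition λ^{2g} conj(a(λ̄⁻¹)) = −a(λ), having precisely 2g̃ pairwise distinct non-unimodular roots and g − g̃ pairs of unimodular roots each of order 2. Then every ξ in the isospectral set K_a vanishes at each unimodular double root of a. -/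
open Matrix

lemma neg_smul_sum_eq {n : ℕ} (μ : ℂ) (f : Fin n → Matrix (Fin 2) (Fin 2) ℂ) :
    -(μ • ∑ k : Fin n, f k) = ∑ k : Fin n, -(μ • f k) := by
  rw [Finset.smul_sum, ← Finset.sum_neg_distrib]

/-- Suppose `a` is a polynomial of degree `2g` satisfying the
reality condition `λ^{2g} conj(a(λ̄⁻¹)) = −a(λ)`, having precisely `2g̃`
pairwise distinct non-unimodular (simple) roots and `g − g̃` pairs of
unimodular roots each of order 2. Then every `ξ` in the isospectral set `K_a`
vanishes at each unimodular double root of `a`. -/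
theorem isospectral_vanishes_at_unimodular_double_roots
    (g gt : ℕ) (hgt : gt ≤ g) (a : Polynomial ℂ) (ha : a ≠ 0)
    (hdeg : a.natDegree = 2 * g)
    (hre : ∀ lam : ℂ, lam ≠ 0 →
      lam ^ (2 * g) * (starRingEnd ℂ) (a.eval ((starRingEnd ℂ lam)⁻¹)) = -a.eval lam)
    (hsimple : ∀ z ∈ a.roots, ‖z‖ ≠ 1 → a.roots.count z = 1)
    (hdouble : ∀ z ∈ a.roots, ‖z‖ = 1 → a.roots.count z = 2)
    (hcard1 : (a.roots.toFinset.filter fun z => ‖z‖ ≠ 1).card = 2 * gt)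
    (hcard2 : (a.roots.toFinset.filter fun z => ‖z‖ = 1).card = g - gt) :
    ∀ ξ ∈ {ξ : Fin (g + 2) → Matrix (Fin 2) (Fin 2) ℂ |
        ξ ∈ LambdaSet g ∧
          ∀ lam : ℂ, lam ≠ 0 → (evalXi g ξ lam).det = -(lam⁻¹ * a.eval lam)},
      ∀ β : ℂ, ‖β‖ = 1 → a.IsRoot β → evalXi g ξ β = 0 := by
  rintro ξ ⟨⟨htr, -, hreal⟩, hdet⟩ β hβ hroot
  have hβ0 : β ≠ 0 := by
    intro h; rw [h] at hβ; simp at hβ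
  have hbb : β * (starRingEnd ℂ) β = 1 := by
    rw [Complex.mul_conj]
    norm_cast
    rw [Complex.normSq_eq_norm_sq, hβ]; norm_num
  have hconj : (starRingEnd ℂ) β = β⁻¹ := by
    field_simp
    linear_combination hbb
  set μ : ℂ := ((starRingEnd ℂ) β) ^ (g + 1) * β ^ 2 with hμdef
  have hμμ : μ * (starRingEnd ℂ) μ = 1 := by
    have : μ * (starRingEnd ℂ) μ
        = (β * (starRingEnd ℂ) β) ^ (g + 1) * (β * (starRingEnd ℂ) β) ^ 2 := by
      simp only [hμdef, _root_.map_mul, map_pow, Complex.conj_conj]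
      ring
    rw [this, hbb]; simp
  have hμ0 : μ ≠ 0 := by
    intro h
    rw [h, zero_mul] at hμμ
    exact one_ne_zero hμμ.symm
  -- scalar identity
  have key : ∀ n : ℕ, n ≤ g + 1 →
      (starRingEnd ℂ) (β ^ (g + 1 - n) * β⁻¹) = μ * (β ^ n * β⁻¹) := by
    intro n hn
    rw [_root_.map_mul, map_pow, hconj, map_inv₀, hconj, inv_inv, hμdef, hconj]
    have h2 : g + 1 - n + n = g + 1 := Nat.sub_add_cancel hn
    rw [← h2, pow_add]
    field_simp
    rw [mul_assoc, ← mul_pow, one_div, inv_mul_cancel₀ hβ0, one_pow, mul_one, Nat.add_sub_cancel]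
  -- conjTranspose identity
  have hx : ∀ j : Fin (g + 2), (ξ j).conjTranspose = -ξ (Fin.rev j) := by
    intro j
    have h := hreal (Fin.rev j)
    rw [Fin.rev_rev] at h
    rw [h]; simp
  have hAH : (evalXi g ξ β).conjTranspose = -(μ • evalXi g ξ β) := by
    unfold evalXi
    rw [Matrix.conjTranspose_sum]
    have step1 : ∀ k : Fin (g + 2),
        ((β ^ (k : ℕ) * β⁻¹) • ξ k).conjTranspose
          = -(((starRingEnd ℂ) (β ^ (k : ℕ) * β⁻¹)) • ξ (Fin.rev k)) := by
      intro k
      rw [Matrix.conjTranspose_smul, hx k]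
      simp
    rw [Finset.sum_congr rfl (fun k _ => step1 k)]
    have step2 : ∑ k : Fin (g + 2),
        -(((starRingEnd ℂ) (β ^ (k : ℕ) * β⁻¹)) • ξ (Fin.rev k))
        = ∑ k : Fin (g + 2),
        -(((starRingEnd ℂ) (β ^ ((Fin.rev k : Fin (g+2)) : ℕ) * β⁻¹)) • ξ k) := by
      apply Fintype.sum_equiv Fin.revPerm
      intro k
      simp [Fin.rev_rev]
    rw [step2]
    rw [neg_smul_sum_eq]
    congr 1
    funext k
    have hk : ((Fin.rev k : Fin (g+2)) : ℕ) = g + 1 - (k : ℕ) := by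
      rw [Fin.val_rev]; omega
    have hkle : (k : ℕ) ≤ g + 1 := Nat.lt_succ_iff.mp k.isLt
    rw [hk, key (k : ℕ) hkle, smul_smul]
  -- trace and det at β
  have hA_tr : (evalXi g ξ β).trace = 0 := by
    unfold evalXi
    rw [Matrix.trace_sum]
    simp [Matrix.trace_smul, htr]
  have hA_det : (evalXi g ξ β).det = 0 := by
    rw [hdet β hβ0, Polynomial.IsRoot.def.mp hroot]
    simp
  set A := evalXi g ξ β with hA
  have e : ∀ i j : Fin 2, (starRingEnd ℂ) (A j i) = -(μ * A i j) := by
    intro i j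
    have h := congrFun (congrFun hAH i) j
    simpa [Matrix.conjTranspose_apply, Matrix.neg_apply, Matrix.smul_apply,
      smul_eq_mul] using h
  have etr : A 0 0 + A 1 1 = 0 := by
    have := hA_tr
    rwa [Matrix.trace_fin_two] at this
  have edet : A 0 0 * A 1 1 - A 0 1 * A 1 0 = 0 := by
    have := hA_det
    rwa [Matrix.det_fin_two] at this
  have hprod : A 0 1 * A 1 0 = -(A 0 0 * A 0 0) := by
    linear_combination -edet + A 0 0 * etr
  have hsumc : ((Complex.normSq (A 0 0) + Complex.normSq (A 0 1) : ℝ) : ℂ) = 0 := by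
    push_cast
    rw [← Complex.mul_conj, ← Complex.mul_conj, e 0 0, e 1 0]
    linear_combination -μ * hprod
  have hsum : Complex.normSq (A 0 0) + Complex.normSq (A 0 1) = 0 := by
    exact_mod_cast hsumc
  have h00 : A 0 0 = 0 := by
    apply Complex.normSq_eq_zero.mp
    have h1 := Complex.normSq_nonneg (A 0 0)
    have h2 := Complex.normSq_nonneg (A 0 1)
    linarith
  have h01 : A 0 1 = 0 := by
    apply Complex.normSq_eq_zero.mp
    have h1 := Complex.normSq_nonneg (A 0 0)
    have h2 := Complex.normSq_nonneg (A 0 1)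
    linarith
  have h11 : A 1 1 = 0 := by linear_combination etr - h00
  have h10 : A 1 0 = 0 := by
    have h := e 1 0
    rw [h01, map_zero] at h
    have : μ * A 1 0 = 0 := by linear_combination h
    rcases mul_eq_zero.mp this with h' | h'
    · exact absurd h' hμ0
    · exact h'
  ext i j
  fin_cases i <;> fin_cases j <;>
    simp only [Matrix.zero_apply] <;> assumption
end
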